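/- Let N ≥ 1 and let P1, P2, P4 be N×N complex matrices such that P1 is unitary (P1†·P1 = I_N), P2 ≠ P4, and (P4−P2)† · (P4−P2) = (‖P4−P2‖_F² / N) · I_N. Then the 2N×(3N−1) matrix G(P1,P2,P1,P4) has rank 2N (full row rank) if and only if w · P1 ≠ w, where w is the 1×N all-ones row vector. -/

import Mathlib

open Matrix

noncomputable section

/-- Squared Frobenius norm of a complex matrix. -/
def frobSq {m n : ℕ} (X : Matrix (Fin m) (Fin n) ℂ) : ℝ :=
  ∑ i, ∑ j, Complex.normSq (X i j)

/-- The 3N × (3N-1) bidiagonal matrix `Ā` of the paper (0-indexed):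
`-1` on the diagonal, `1` on the subdiagonal, zeros elsewhere. -/
def Abar (N : ℕ) : Matrix (Fin (3 * N)) (Fin (3 * N - 1)) ℂ :=
  Matrix.of fun i j =>
    if i.val = j.val then -1 else if i.val = j.val + 1 then 1 else 0

/-- 2N × 3N block matrix `[[A, B, C], [D, E, F]]` built out of N × N blocks. -/
def blk23 {N : ℕ} (A B C D E F : Matrix (Fin N) (Fin N) ℂ) :
    Matrix (Fin (2 * N)) (Fin (3 * N)) ℂ :=
  Matrix.of fun i j =>
    if hi : i.val < N then
      if hj : j.val < N then A ⟨i.val, hi⟩ ⟨j.val, hj⟩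
      else if hj2 : j.val < 2 * N then B ⟨i.val, hi⟩ ⟨j.val - N, by omega⟩
      else C ⟨i.val, hi⟩ ⟨j.val - 2 * N, by have := j.isLt; omega⟩
    else
      if hj : j.val < N then D ⟨i.val - N, by have := i.isLt; omega⟩ ⟨j.val, hj⟩
      else if hj2 : j.val < 2 * N then
        E ⟨i.val - N, by have := i.isLt; omega⟩ ⟨j.val - N, by omega⟩
      else F ⟨i.val - N, by have := i.isLt; omega⟩ ⟨j.val - 2 * N, by have := j.isLt; omega⟩

/-- 2N × 2N block matrix `[[A, B], [C, D]]` built out of N × N blocks. -/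
def blk22 {N : ℕ} (A B C D : Matrix (Fin N) (Fin N) ℂ) :
    Matrix (Fin (2 * N)) (Fin (2 * N)) ℂ :=
  Matrix.of fun i j =>
    if hi : i.val < N then
      if hj : j.val < N then A ⟨i.val, hi⟩ ⟨j.val, hj⟩
      else B ⟨i.val, hi⟩ ⟨j.val - N, by have := j.isLt; omega⟩
    else
      if hj : j.val < N then C ⟨i.val - N, by have := i.isLt; omega⟩ ⟨j.val, hj⟩
      else D ⟨i.val - N, by have := i.isLt; omega⟩ ⟨j.val - N, by have := j.isLt; omega⟩

/-- The 2N × (3N-1) matrix `G(P1, P2, P3, P4) = [[I, P1, P1·P2], [I, P3, P3·P4]] · Ā`. -/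
def Gmat {N : ℕ} (P1 P2 P3 P4 : Matrix (Fin N) (Fin N) ℂ) :
    Matrix (Fin (2 * N)) (Fin (3 * N - 1)) ℂ :=
  blk23 1 P1 (P1 * P2) 1 P3 (P3 * P4) * Abar N

/-- The 1 × N all-ones row vector `w`. -/
def wrow (N : ℕ) : Matrix (Fin 1) (Fin N) ℂ :=
  Matrix.of fun _ _ => 1

/-!
Write a row vector of length `2N` as `(a, b)`. Since the left kernel of `Ā` consists of the
constant vectors, `(a, b) G = 0` says that `(a, b) [[I, P1, P1 P2], [I, P1, P1 P4]] = c w` for a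
scalar `c`, i.e. `a + b = c w`, `(a + b) P1 = c w` and `(a + b) P1 P2 + b P1 (P4 - P2) = c w`.
The hypothesis on `P4 - P2` makes it a nonzero multiple of a unitary matrix, so `P1 (P4 - P2)`
is invertible. If `w P1 ≠ w`, the second equation forces `c = 0`, and then `a = -b` and
`b P1 (P4 - P2) = 0` give `a = b = 0`. If `w P1 = w`, then `c = 1`,
`b = (w - w P2) (P1 (P4 - P2))⁻¹`, `a = w - b` is a nonzero left kernel vector.
-/

theorem Matrix.rank_eq_card_iff_vecMul_eq_zero {m n R : Type*} [Field R] [Fintype m]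
    [Fintype n] (A : Matrix m n R) :
    A.rank = Fintype.card m ↔ ∀ v : m → R, v ᵥ* A = 0 → v = 0 := by
  rw [rank_eq_finrank_span_row, ← Set.finrank, eq_comm,
    ← linearIndependent_iff_card_eq_finrank_span, ← vecMul_injective_iff, ← coe_vecMulLinear,
    injective_iff_map_eq_zero]
  rfl

open scoped ComplexOrder in
theorem Matrix.isUnit_of_conjTranspose_mul_self_eq_smul_one {n 𝕜 : Type*} [Fintype n]
    [DecidableEq n] [RCLike 𝕜] {X : Matrix n n 𝕜} {c : 𝕜} (hX : X ≠ 0)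
    (h : Xᴴ * X = c • 1) : IsUnit X := by
  have hc : c ≠ 0 := by
    rintro rfl
    rw [zero_smul, conjTranspose_mul_self_eq_zero] at h
    exact hX h
  refine IsUnit.of_mul_eq_one_right (c⁻¹ • Xᴴ) ?_
  rw [smul_mul, h, smul_smul, inv_mul_cancel₀ hc, one_smul]

theorem wrow_mul_eq_wrow_iff {N : ℕ} (P : Matrix (Fin N) (Fin N) ℂ) :
    wrow N * P = wrow N ↔ 1 ᵥ* P = 1 := by
  rw [show wrow N = replicateRow (Fin 1) 1 from rfl, ← replicateRow_vecMul,
    replicateRow_inj]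

theorem vecMul_Abar_apply {N : ℕ} (u : Fin (3 * N) → ℂ) (j : Fin (3 * N - 1)) :
    (u ᵥ* Abar N) j = u ⟨j + 1, by omega⟩ - u ⟨j, by omega⟩ := by
  have hcol : (fun i => Abar N i j) =
      Pi.single ⟨j + 1, by omega⟩ 1 - Pi.single ⟨j, by omega⟩ 1 := by
    ext i
    simp only [Abar, of_apply, Pi.sub_apply, Pi.single_apply, Fin.ext_iff]
    split_ifs <;> first | omega | norm_num
  change u ⬝ᵥ (fun i => Abar N i j) = _
  rw [hcol, dotProduct_sub, dotProduct_single, dotProduct_single, mul_one, mul_one]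

theorem vecMul_Abar_eq_zero_iff {N : ℕ} (u : Fin (3 * N) → ℂ) :
    u ᵥ* Abar N = 0 ↔ ∃ c : ℂ, u = c • 1 := by
  constructor
  · intro h
    rcases Nat.eq_zero_or_pos N with rfl | hN
    · exact ⟨0, funext fun i => i.elim0⟩
    refine ⟨u ⟨0, by omega⟩, funext fun ⟨k, hk⟩ => ?_⟩
    induction k with
    | zero => simp
    | succ k ih =>
      have hstep := congrFun h ⟨k, by omega⟩
      rw [vecMul_Abar_apply, Pi.zero_apply, sub_eq_zero] at hstep
      exact hstep.trans (ih (by omega))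
  · rintro ⟨c, rfl⟩
    funext j
    simp [vecMul_Abar_apply]

def vecBlock {α : Type*} {m N : ℕ} (v : Fin (m * N) → α) (i : Fin m) : Fin N → α :=
  fun k => v (finProdFinEquiv (i, k))

theorem eq_zero_iff_forall_vecBlock_eq_zero {α : Type*} [Zero α] {m N : ℕ}
    (v : Fin (m * N) → α) : v = 0 ↔ ∀ i, vecBlock v i = 0 := by
  simp only [funext_iff, vecBlock, Pi.zero_apply,
    ← Prod.forall (p := fun p => v (finProdFinEquiv p) = 0)]
  exact finProdFinEquiv.forall_congr_right.symm

-- `finProdFinEquiv (i, k) = k + N * i`: the pair `(i, k)` is entry `k` of block `i`.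
theorem blk23_finProdFinEquiv {N : ℕ} (A B C D E F : Matrix (Fin N) (Fin N) ℂ) (i : Fin 2)
    (j : Fin 3) (k l : Fin N) :
    blk23 A B C D E F (finProdFinEquiv (i, k)) (finProdFinEquiv (j, l)) =
      !![A, B, C; D, E, F] i j k l := by
  have := k.isLt; have := l.isLt
  fin_cases i <;> fin_cases j <;>
    simp only [blk23, finProdFinEquiv, Equiv.coe_fn_mk, of_apply, cons_val', cons_val_fin_one] <;>
    split_ifs <;> first | omega | (congr 1 <;> ext <;> simp <;> omega)

theorem vecMul_blk23_finProdFinEquiv {N : ℕ} (A B C D E F : Matrix (Fin N) (Fin N) ℂ)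
    (v : Fin (2 * N) → ℂ) (j : Fin 3) (l : Fin N) :
    (v ᵥ* blk23 A B C D E F) (finProdFinEquiv (j, l)) =
      (vecBlock v 0 ᵥ* !![A, B, C; D, E, F] 0 j +
        vecBlock v 1 ᵥ* !![A, B, C; D, E, F] 1 j) l := by
  simp only [vecMul, dotProduct, ← finProdFinEquiv.sum_comp, Fintype.sum_prod_type,
    Fin.sum_univ_two, blk23_finProdFinEquiv, Pi.add_apply, vecBlock]

theorem vecMul_Gmat_eq_zero_iff {N : ℕ} (P1 P2 P3 P4 : Matrix (Fin N) (Fin N) ℂ)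
    (v : Fin (2 * N) → ℂ) :
    v ᵥ* Gmat P1 P2 P3 P4 = 0 ↔ ∃ c : ℂ, vecBlock v 0 + vecBlock v 1 = c • 1 ∧
      vecBlock v 0 ᵥ* P1 + vecBlock v 1 ᵥ* P3 = c • 1 ∧
      vecBlock v 0 ᵥ* (P1 * P2) + vecBlock v 1 ᵥ* (P3 * P4) = c • 1 := by
  rw [Gmat, ← vecMul_vecMul, vecMul_Abar_eq_zero_iff]
  refine exists_congr fun c => ?_
  simp only [funext_iff, Pi.smul_apply, Pi.one_apply, smul_eq_mul, mul_one,
    ← finProdFinEquiv.forall_congr_right (q := fun p => (v ᵥ* _) p = _), Prod.forall,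
    vecMul_blk23_finProdFinEquiv, Fin.forall_fin_succ, of_apply, cons_val', cons_val_fin_one,
    cons_val_zero, cons_val_one, cons_val_succ, Pi.add_apply, vecMul_one, forall_const]

section GmatKernel

variable {N : ℕ} {P1 P2 P4 : Matrix (Fin N) (Fin N) ℂ}

theorem eq_zero_of_vecMul_Gmat_eq_zero (hw : 1 ᵥ* P1 ≠ 1) (hX : IsUnit (P1 * (P4 - P2)))
    {v : Fin (2 * N) → ℂ} (hv : v ᵥ* Gmat P1 P2 P1 P4 = 0) : v = 0 := by
  obtain ⟨c, hsum, hP1, hlast⟩ := (vecMul_Gmat_eq_zero_iff P1 P2 P1 P4 v).1 hv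
  set a := vecBlock v 0
  set b := vecBlock v 1
  have hc : c = 0 := by
    by_contra hc
    rw [← add_vecMul, hsum, smul_vecMul] at hP1
    exact hw (smul_right_injective _ hc hP1)
  have ha : a = -b := eq_neg_of_add_eq_zero_left (by rw [hsum, hc, zero_smul])
  have hb : b = 0 := by
    refine (vecMul_injective_of_isUnit hX).eq_iff.1 ?_
    rw [hc, zero_smul, ha, neg_vecMul] at hlast
    rw [zero_vecMul, mul_sub, vecMul_sub]
    linear_combination hlast
  rw [eq_zero_iff_forall_vecBlock_eq_zero, Fin.forall_fin_two]
  show a = 0 ∧ b = 0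
  exact ⟨by rw [ha, hb, neg_zero], hb⟩

theorem exists_ne_zero_vecMul_Gmat_eq_zero [NeZero N] (hw : 1 ᵥ* P1 = 1)
    (hX : IsUnit (P1 * (P4 - P2))) :
    ∃ v : Fin (2 * N) → ℂ, v ≠ 0 ∧ v ᵥ* Gmat P1 P2 P1 P4 = 0 := by
  -- With blocks `1 - b` and `b`, the last block condition becomes `b P1 (P4 - P2) = 1 - 1 P2`.
  set b := (1 - 1 ᵥ* P2) ᵥ* (P1 * (P4 - P2))⁻¹
  set v : Fin (2 * N) → ℂ := Function.uncurry ![1 - b, b] ∘ finProdFinEquiv.symm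
  have hv0 : vecBlock v 0 = 1 - b := by
    ext k
    simp only [v, vecBlock, Function.comp_apply, Equiv.symm_apply_apply,
      Function.uncurry_apply_pair]
    rfl
  have hv1 : vecBlock v 1 = b := by
    ext k
    simp only [v, vecBlock, Function.comp_apply, Equiv.symm_apply_apply,
      Function.uncurry_apply_pair]
    rfl
  have hbX : b ᵥ* (P1 * (P4 - P2)) = 1 - 1 ᵥ* P2 := by
    rw [vecMul_vecMul, nonsing_inv_mul _ ((isUnit_iff_isUnit_det _).1 hX), vecMul_one]
  refine ⟨v, fun h => ?_, (vecMul_Gmat_eq_zero_iff P1 P2 P1 P4 v).2 ⟨1, ?_, ?_, ?_⟩⟩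
  · have hsum : (1 : Fin N → ℂ) = vecBlock v 0 + vecBlock v 1 := by
      rw [hv0, hv1, sub_add_cancel]
    rw [h] at hsum
    exact one_ne_zero (hsum.trans (add_zero 0))
  · rw [hv0, hv1, sub_add_cancel, one_smul]
  · rw [hv0, hv1, ← add_vecMul, sub_add_cancel, hw, one_smul]
  · rw [mul_sub, vecMul_sub] at hbX
    rw [hv0, hv1, one_smul, sub_vecMul, ← vecMul_vecMul, hw]
    linear_combination hbX

end GmatKernel

theorem stmt7 (N : ℕ) (hN : 1 ≤ N) (P1 P2 P4 : Matrix (Fin N) (Fin N) ℂ)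
    (hP1 : P1ᴴ * P1 = 1) (hne : P2 ≠ P4)
    (hcond : (P4 - P2)ᴴ * (P4 - P2) = ((frobSq (P4 - P2) / (N : ℝ) : ℝ) : ℂ) • 1) :
    (Gmat P1 P2 P1 P4).rank = 2 * N ↔ wrow N * P1 ≠ wrow N := by
  have hX : IsUnit (P1 * (P4 - P2)) :=
    (IsUnit.of_mul_eq_one_right _ hP1).mul
      (isUnit_of_conjTranspose_mul_self_eq_smul_one (sub_ne_zero.2 hne.symm) hcond)
  have : NeZero N := ⟨by omega⟩
  have hrank := rank_eq_card_iff_vecMul_eq_zero (Gmat P1 P2 P1 P4)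
  rw [Fintype.card_fin] at hrank
  rw [hrank, Ne, wrow_mul_eq_wrow_iff]
  constructor
  · intro hinj hw
    obtain ⟨v, hv0, hv⟩ := exists_ne_zero_vecMul_Gmat_eq_zero hw hX
    exact hv0 (hinj v hv)
  · exact fun hw v => eq_zero_of_vecMul_Gmat_eq_zero hw hX
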